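/- Adding an event to an existing part strictly increases graph entropy when there are at least two parts: if n : Fin k → ℕ is a partition with k ≥ 2 parts, all of size at least 1, j : Fin k is any index, and n' agrees with n except that n' j = n j + 1, then E(n') > E(n). -/

import Mathlib

/-!
Writing `f x = x log x`, adding an event to part `j` changes the entropy by
`Δf(N) - Δf(n j)`, where `Δf(x) = f(x + 1) - f(x)` and `N` is the total size. Since `f` is
strictly convex, its forward difference is strictly increasing, and `n j < N` because some
other part is nonempty.
-/

/-- Graph entropy of a partition with part sizes `n i`:
`E(n) = N·log N − Σ_i (n i)·log(n i)` where `N = Σ_i n i`. -/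
noncomputable def graphEntropy {k : ℕ} (n : Fin k → ℕ) : ℝ :=
  (∑ i, (n i : ℝ)) * Real.log (∑ i, (n i : ℝ)) -
    ∑ i, (n i : ℝ) * Real.log (n i)

open Real Finset Function
open scoped fwdDiff

theorem StrictConvexOn.fwdDiff_lt_fwdDiff {𝕜 : Type*} [Field 𝕜] [LinearOrder 𝕜]
    [IsStrictOrderedRing 𝕜] {s : Set 𝕜} {f : 𝕜 → 𝕜} (hf : StrictConvexOn 𝕜 s f) {h x y : 𝕜}
    (hh : 0 < h) (hx : x ∈ s) (hyh : y + h ∈ s) (hxy : x < y) : Δ_[h] f x < Δ_[h] f y := by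
  have hxh : x + h ∈ s := hf.1.ordConnected.out hx hyh ⟨by linarith, by linarith⟩
  have hy : y ∈ s := hf.1.ordConnected.out hx hyh ⟨hxy.le, by linarith⟩
  -- slope (x, x + h) < slope (x, y + h) < slope (y, y + h)
  have hleft := hf.secant_strict_mono hx hxh hyh (by linarith) (by linarith) (by linarith)
  have hright := hf.secant_strict_mono hyh hx hy (by linarith) (by linarith) hxy
  rw [add_sub_cancel_left] at hleft
  rw [← neg_div_neg_eq, neg_sub, neg_sub, ← neg_div_neg_eq (f y - _), neg_sub, neg_sub,
    add_sub_cancel_left] at hright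
  exact (div_lt_div_iff_of_pos_right hh).mp (hleft.trans hright)

lemma Fintype.sum_apply_update {ι α M : Type*} [Fintype ι] [DecidableEq ι] [AddCommGroup M]
    (F : α → M) (n : ι → α) (j : ι) (b : α) :
    ∑ i, F (update n j b i) = ∑ i, F (n i) + (F b - F (n j)) := by
  simp_rw [apply_update (fun _ => F), sum_update_of_mem (mem_univ j),
    ← add_sum_erase _ _ (mem_univ j), sdiff_singleton_eq_erase]
  abel

lemma graphEntropy_update_succ {k : ℕ} (n : Fin k → ℕ) (j : Fin k) :
    graphEntropy (update n j (n j + 1)) =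
      graphEntropy n + (Δ_[1] (fun x : ℝ => x * log x) (∑ i, (n i : ℝ)) -
        Δ_[1] (fun x : ℝ => x * log x) (n j)) := by
  unfold graphEntropy
  rw [Fintype.sum_apply_update (fun m : ℕ => (m : ℝ)),
    Fintype.sum_apply_update (fun m : ℕ => (m : ℝ) * log m)]
  simp only [fwdDiff, Nat.cast_add, Nat.cast_one, add_sub_cancel_left]
  ring

/-- Adding an event to an existing part strictly increases graph entropy when
there are at least two parts: if `n` has `k ≥ 2` parts, all of size at least 1,
and `n'` agrees with `n` except that `n' j = n j + 1`, then `E(n') > E(n)`. -/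
theorem graphEntropy_update_lt (k : ℕ) (hk : 2 ≤ k) (n : Fin k → ℕ)
    (hn : ∀ i, 1 ≤ n i) (j : Fin k) (n' : Fin k → ℕ)
    (hj : n' j = n j + 1) (hne : ∀ i, i ≠ j → n' i = n i) :
    graphEntropy n' > graphEntropy n := by
  obtain rfl : n' = update n j (n j + 1) := eq_update_iff.mpr ⟨hj, hne⟩
  have : Nontrivial (Fin k) := Fin.nontrivial_iff_two_le.mpr hk
  obtain ⟨i, hij⟩ := exists_ne j
  have hlt : n j < ∑ i, n i :=
    single_lt_sum hij (mem_univ _) (mem_univ _) (hn i) fun _ _ _ => Nat.zero_le _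
  rw [graphEntropy_update_succ, gt_iff_lt, lt_add_iff_pos_right, sub_pos]
  exact strictConvexOn_mul_log.fwdDiff_lt_fwdDiff one_pos (Set.mem_Ici.mpr (Nat.cast_nonneg _))
    (Set.mem_Ici.mpr (by positivity)) (by exact_mod_cast hlt)
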